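/- For any priority π, the draft rule φ^π is robust against trades: for every problem (≿, X), the relation ▶ on agent–object pairs defined by (i,x) ▶ (j,y) iff x ∈ φ^π_i(≿, X), y ≻_i x, and i ≠ j, is acyclic. -/

import Mathlib

/-! When agent `i` picks `x` at step `k`, every object `i` prefers to `x` has already been taken,
so an object `y` that `i` prefers to `x` was picked at a step `l < k`. Along a trading chain
`(i, x) ▶ (j, y) ▶ …` the pick times therefore strictly decrease, and no chain can close into a
cycle. -/

open Finset

noncomputable section

abbrev Obj := ℕ

def PD (r : Obj → Obj → Prop) (S T : Finset Obj) : Prop :=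
  ∃ μ : {x // x ∈ T} → {x // x ∈ S}, Function.Injective μ ∧ ∀ x, r (μ x).1 x.1

def StrictPD (r : Obj → Obj → Prop) (S T : Finset Obj) : Prop :=
  PD r S T ∧ ¬ PD r T S

def LinProfile {n : ℕ} (pref : Fin n → Obj → Obj → Prop) : Prop :=
  ∀ i, IsLinearOrder Obj (pref i)

def IsAlloc {n : ℕ} (A : Fin n → Finset Obj) (X : Finset Obj) : Prop :=
  (∀ i, A i ⊆ X) ∧ ∀ i j, i ≠ j → Disjoint (A i) (A j)

open Classical in
def topOf (r : Obj → Obj → Prop) (X : Finset Obj) : Obj :=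
  if h : ∃ m ∈ X, ∀ x ∈ X, r m x then h.choose else 0

def remaining {n : ℕ} (pref : Fin n → Obj → Obj → Prop) (f : ℕ → Fin n)
    (X : Finset Obj) : ℕ → Finset Obj
  | 0 => X
  | k + 1 => (remaining pref f X k).erase (topOf (pref (f k)) (remaining pref f X k))

def draft {n : ℕ} (pref : Fin n → Obj → Obj → Prop) (f : ℕ → Fin n)
    (X : Finset Obj) (i : Fin n) : Finset Obj :=
  ((Finset.range X.card).filter (fun k => f k = i)).image
    (fun k => topOf (pref (f k)) (remaining pref f X k))

def roundRobin {n : ℕ} (hn : 0 < n) (π : Equiv.Perm (Fin n)) (k : ℕ) : Fin n :=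
  π.symm ⟨k % n, Nat.mod_lt k hn⟩

def draftPi {n : ℕ} (hn : 0 < n) (pref : Fin n → Obj → Obj → Prop)
    (π : Equiv.Perm (Fin n)) (X : Finset Obj) (i : Fin n) : Finset Obj :=
  draft pref (roundRobin hn π) X i

theorem Finset.Nonempty.exists_mem_forall_rel {α : Type*} (r : α → α → Prop) [IsTrans α r]
    [Std.Total r] {S : Finset α} (hS : S.Nonempty) : ∃ m ∈ S, ∀ x ∈ S, r m x := by
  induction hS using Finset.Nonempty.cons_induction with
  | singleton a => exact ⟨a, mem_singleton_self a, by simpa using refl_of r a⟩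
  | cons a S ha _ ih =>
    obtain ⟨m, hm, hmin⟩ := ih
    rcases total_of r a m with ham | hma
    · refine ⟨a, mem_cons_self a S, (forall_mem_cons ha _).2 ⟨refl_of r a, ?_⟩⟩
      exact fun x hx => _root_.trans ham (hmin x hx)
    · exact ⟨m, mem_cons_of_mem hm, (forall_mem_cons ha _).2 ⟨hma, hmin⟩⟩

theorem topOf_mem {r : Obj → Obj → Prop} [IsTrans Obj r] [Std.Total r] {S : Finset Obj}
    (hS : S.Nonempty) : topOf r S ∈ S := by
  have h := hS.exists_mem_forall_rel r
  rw [topOf, dif_pos h]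
  exact h.choose_spec.1

theorem topOf_rel {r : Obj → Obj → Prop} [IsTrans Obj r] [Std.Total r] {S : Finset Obj}
    {x : Obj} (hx : x ∈ S) : r (topOf r S) x := by
  have h := Finset.Nonempty.exists_mem_forall_rel r ⟨x, hx⟩
  rw [topOf, dif_pos h]
  exact h.choose_spec.2 x hx

section Draft

variable {n : ℕ} {pref : Fin n → Obj → Obj → Prop} {f : ℕ → Fin n} {X : Finset Obj}

theorem remaining_antitone : Antitone (remaining pref f X) :=
  antitone_nat_of_succ_le fun _ => erase_subset _ _

theorem card_remaining (hpref : LinProfile pref) (k : ℕ) :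
    (remaining pref f X k).card = X.card - k := by
  induction k with
  | zero => rfl
  | succ k ih =>
    have := hpref (f k)
    rw [remaining]
    rcases (remaining pref f X k).eq_empty_or_nonempty with hempty | hne
    · simp only [hempty, erase_empty, card_empty] at ih ⊢
      omega
    · rw [card_erase_of_mem (topOf_mem hne), ih]
      omega

theorem remaining_nonempty (hpref : LinProfile pref) {k : ℕ} (hk : k < X.card) :
    (remaining pref f X k).Nonempty := by
  rw [← card_pos, card_remaining hpref]
  omega

variable (pref f X) in
def PickedAt (i : Fin n) (x : Obj) (k : ℕ) : Prop :=
  k < X.card ∧ f k = i ∧ topOf (pref (f k)) (remaining pref f X k) = x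

theorem mem_draft_iff {i : Fin n} {x : Obj} :
    x ∈ draft pref f X i ↔ ∃ k, PickedAt pref f X i x k := by
  simp only [draft, mem_image, mem_filter, mem_range, PickedAt, and_assoc]

theorem PickedAt.lt_of_pref (hpref : LinProfile pref) {i j : Fin n} {x y : Obj} {k l : ℕ}
    (hx : PickedAt pref f X i x k) (hy : PickedAt pref f X j y l) (hyx : pref i y x)
    (hne : y ≠ x) : l < k := by
  obtain ⟨hk, rfl, rfl⟩ := hx
  obtain ⟨hl, rfl, rfl⟩ := hy
  have := hpref (f k)
  have := hpref (f l)
  by_contra! hkl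
  have hy_avail : topOf (pref (f l)) (remaining pref f X l) ∈ remaining pref f X k :=
    remaining_antitone hkl (topOf_mem (remaining_nonempty hpref hl))
  exact hne (antisymm_of _ hyx (topOf_rel hy_avail))

variable (pref) in
def Trade (A : Fin n → Finset Obj) (p q : Fin n × Obj) : Prop :=
  p.2 ∈ A p.1 ∧ pref p.1 q.2 p.2 ∧ q.2 ≠ p.2 ∧ p.1 ≠ q.1

theorem lt_of_transGen_trade (hpref : LinProfile pref) {a c : Fin n × Obj}
    (hac : Relation.TransGen (Trade pref (draft pref f X)) a c) {k l : ℕ}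
    (ha : PickedAt pref f X a.1 a.2 k) (hc : PickedAt pref f X c.1 c.2 l) : l < k := by
  induction hac generalizing l with
  | single hac => exact ha.lt_of_pref hpref hc hac.2.1 hac.2.2.1
  | tail _ hbc ih =>
    obtain ⟨_, hb⟩ := mem_draft_iff.1 hbc.1
    exact (hb.lt_of_pref hpref hc hbc.2.1 hbc.2.2.1).trans (ih hb)

theorem draft_trade_acyclic (hpref : LinProfile pref) (p : Fin n × Obj) :
    ¬ Relation.TransGen (Trade pref (draft pref f X)) p p := by
  intro hcycle
  obtain ⟨_, hp_trade, -⟩ := Relation.TransGen.head'_iff.1 hcycle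
  obtain ⟨k, hp⟩ := mem_draft_iff.1 hp_trade.1
  exact lt_irrefl k (lt_of_transGen_trade hpref hcycle hp hp)

end Draft

theorem draft_robust_against_trades_general {n : ℕ} (hn : 0 < n) (π : Equiv.Perm (Fin n))
    (pref : Fin n → Obj → Obj → Prop) (hpref : LinProfile pref)
    (X : Finset Obj) :
    ∀ p : Fin n × Obj,
      ¬ Relation.TransGen
        (fun p q : Fin n × Obj =>
          p.2 ∈ draftPi hn pref π X p.1 ∧ pref p.1 q.2 p.2 ∧ q.2 ≠ p.2 ∧ p.1 ≠ q.1)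
        p p :=
  draft_trade_acyclic hpref

theorem draft_robust_against_trades {n : ℕ} (hn : 0 < n) (π : Equiv.Perm (Fin n))
    (pref : Fin n → Obj → Obj → Prop) (hpref : LinProfile pref)
    (X : Finset Obj) (hX : X.Nonempty) :
    ∀ p : Fin n × Obj,
      ¬ Relation.TransGen
        (fun p q : Fin n × Obj =>
          p.2 ∈ draftPi hn pref π X p.1 ∧ pref p.1 q.2 p.2 ∧ q.2 ≠ p.2 ∧ p.1 ≠ q.1)
        p p :=
  draft_robust_against_trades_general hn π pref hpref X
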